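/- Let {X(t)} be a uniformly layered walk and fix n≥1. For y,z∈D_n let g(y,z) denote the expected number of visits to z, starting from y, strictly before the walk first exits D_n (this expectation is finite). Then for all z∈D_n, g(o,z) ≥ (1/#D_n)·Σ_{y∈D_n} g(y,z). -/

import Mathlib

open MeasureTheory Filter
open scoped Classical ENNReal

abbrev Z2 : Type := ℤ × ℤ

def origin : Z2 := (0, 0)

def dnorm (x : Z2) : ℕ := x.1.natAbs + x.2.natAbs

def layer (k : ℕ) : Set Z2 := {x | dnorm x = k}

def layerCard (k : ℕ) : ℕ := if k = 0 then 1 else 4 * k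

def diamond (r : ℝ) : Set Z2 := {x | (dnorm x : ℝ) ≤ r}

noncomputable def diamondF (n : ℕ) : Finset Z2 :=
  (Finset.Icc (-(n : ℤ), -(n : ℤ)) ((n : ℤ), (n : ℤ))).filter fun x => dnorm x ≤ n

def vol (n : ℕ) : ℕ := 2 * n * (n + 1) + 1

/-- A uniformly layered walk kernel: a Markov transition kernel on `ℤ²`
satisfying conditions (U1), (U2), (U3). -/
structure IsULW (Q : Z2 → Z2 → ℝ) : Prop where
  nonneg : ∀ x y, 0 ≤ Q x y
  rowSum : ∀ x, ∑' y, Q x y = 1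
  u1 : ∀ x y, dnorm x + 1 < dnorm y → Q x y = 0
  u2 : ∀ x, ∃ y, dnorm y = dnorm x + 1 ∧ 0 < Q x y
  u3 : ∀ (k : ℕ) (y z : Z2), dnorm y = dnorm z →
    ∑' x : layer k, Q x.1 y = ∑' x : layer k, Q x.1 z

/-- `X` is a Markov chain with transition kernel `Q` started at `x0`:
all finite-dimensional distributions are specified. -/
def IsWalkFrom {Ω : Type} [MeasurableSpace Ω] (P : Measure Ω)
    (X : ℕ → Ω → Z2) (Q : Z2 → Z2 → ℝ) (x0 : Z2) : Prop :=
  ∀ (t : ℕ) (path : ℕ → Z2),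
    P {ω | ∀ s ≤ t, X s ω = path s} =
      ENNReal.ofReal ((if path 0 = x0 then (1 : ℝ) else 0) *
        ∏ s ∈ Finset.range t, Q (path s) (path (s + 1)))

/-- `X` is a Markov chain with transition kernel `Q` started from the uniform
distribution on layer `L_k`. -/
def IsWalkUniform {Ω : Type} [MeasurableSpace Ω] (P : Measure Ω)
    (X : ℕ → Ω → Z2) (Q : Z2 → Z2 → ℝ) (k : ℕ) : Prop :=
  ∀ (t : ℕ) (path : ℕ → Z2),
    P {ω | ∀ s ≤ t, X s ω = path s} =
      ENNReal.ofReal ((if dnorm (path 0) = k then (1 : ℝ) / layerCard k else 0) *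
        ∏ s ∈ Finset.range t, Q (path s) (path (s + 1)))

/-- The walks `Y 0, Y 1, …` are independent. -/
def IndepWalks {Ω : Type} [MeasurableSpace Ω] (P : Measure Ω)
    (Y : ℕ → ℕ → Ω → Z2) : Prop :=
  ∀ (I : Finset ℕ) (t : ℕ) (path : ℕ → ℕ → Z2),
    P {ω | ∀ i ∈ I, ∀ s ≤ t, Y i s ω = path i s} =
      ∏ i ∈ I, P {ω | ∀ s ≤ t, Y i s ω = path i s}

/-- Internal DLA clusters built from the walks `Y`:
`gCluster Y k = A(k+1)`, the cluster of `k+1` occupied sites; the walk `Y i`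
is the walk performed by the particle producing `A(i+1)` from `A(i)`,
and `Y 0 0` is the position of the very first particle. -/
noncomputable def gCluster {Ω : Type} (Y : ℕ → ℕ → Ω → Z2) : ℕ → Ω → Finset Z2
  | 0 => fun ω => {Y 0 0 ω}
  | k + 1 => fun ω =>
      insert (Y (k + 1) (sInf {t | Y (k + 1) t ω ∉ gCluster Y k ω}) ω)
        (gCluster Y k ω)

/-- The stopped process at level `n`: `stoppedC Y n k = S(k+1)`; particles also
stop upon reaching layer `L_n`. -/
noncomputable def stoppedC {Ω : Type} (Y : ℕ → ℕ → Ω → Z2) (n : ℕ) : ℕ → Ω → Finset Z2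
  | 0 => fun _ => {origin}
  | k + 1 => fun ω =>
      insert (Y (k + 1)
          (sInf {t | Y (k + 1) t ω ∈ layer n ∨ Y (k + 1) t ω ∉ stoppedC Y n k ω}) ω)
        (stoppedC Y n k ω)

/-- The extended process at level `n`: `extC Y n i = E(i)`, starting from the full
diamond `D_n` and driven by the walks `Y (vol n + i)`. -/
noncomputable def extC {Ω : Type} (Y : ℕ → ℕ → Ω → Z2) (n : ℕ) : ℕ → Ω → Finset Z2
  | 0 => fun _ => diamondF n
  | k + 1 => fun ω =>
      insert (Y (vol n + k) (sInf {t | Y (vol n + k) t ω ∉ extC Y n k ω}) ω)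
        (extC Y n k ω)

/-- The outward directed kernel `Q_out`. -/
noncomputable def Qout (x y : Z2) : ℝ :=
  if x = origin then (if dnorm y = 1 then 1 / 4 else 0)
  else if x.1 ≠ 0 ∧ x.2 ≠ 0 then
    if y = (x.1, x.2 + x.2.sign) then
      ((x.2.natAbs : ℝ) + 1 / 2) / ((x.1.natAbs : ℝ) + (x.2.natAbs : ℝ) + 1)
    else if y = (x.1 + x.1.sign, x.2) then
      ((x.1.natAbs : ℝ) + 1 / 2) / ((x.1.natAbs : ℝ) + (x.2.natAbs : ℝ) + 1)
    else 0
  else if x.2 = 0 then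
    if y = (x.1, 1) ∨ y = (x.1, -1) then (1 / 2) / ((x.1.natAbs : ℝ) + 1)
    else if y = (x.1 + x.1.sign, 0) then (x.1.natAbs : ℝ) / ((x.1.natAbs : ℝ) + 1)
    else 0
  else
    if y = (1, x.2) ∨ y = (-1, x.2) then (1 / 2) / ((x.2.natAbs : ℝ) + 1)
    else if y = (0, x.2 + x.2.sign) then (x.2.natAbs : ℝ) / ((x.2.natAbs : ℝ) + 1)
    else 0

/-- The inward directed kernel `Q_in`. -/
noncomputable def Qin (x y : Z2) : ℝ :=
  if x = origin then (if y = origin then 1 else 0)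
  else if x.1 ≠ 0 ∧ x.2 ≠ 0 then
    if y = (x.1, x.2 - x.2.sign) then
      ((x.2.natAbs : ℝ) - 1 / 2) / ((x.1.natAbs : ℝ) + (x.2.natAbs : ℝ) - 1)
    else if y = (x.1 - x.1.sign, x.2) then
      ((x.1.natAbs : ℝ) - 1 / 2) / ((x.1.natAbs : ℝ) + (x.2.natAbs : ℝ) - 1)
    else 0
  else if x.2 = 0 then
    if y = (x.1 - x.1.sign, 0) then 1 else 0
  else
    if y = (0, x.2 - x.2.sign) then 1 else 0

/-- The interpolating kernel `Q_p = p Q_in + (1-p) Q_out`. -/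
noncomputable def Qp (p : ℝ) (x y : Z2) : ℝ := p * Qin x y + (1 - p) * Qout x y

/-- First hitting time of the set `A`, valued in `ℕ∞` (`⊤` when `A` is never visited). -/
noncomputable def hitTimeE {Ω : Type} (X : ℕ → Ω → Z2) (A : Set Z2) (ω : Ω) : ℕ∞ :=
  sInf ((fun t : ℕ => (t : ℕ∞)) '' {t | X t ω ∈ A})

/-!
Everything reduces to the walk killed outside a diamond: `P (X t = z, X s ∈ A for s ≤ t)` is a
finite sum of path weights, so the Green function is the series of powers of the killed kernel.

Started at the origin, the walk killed outside `D_j` has at every time a distribution that is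
constant on each layer, since (U3) propagates this from one step to the next. By (U1) it exits
`D_j` into `L_{j+1}`, and by (U2) it exits within `j + 1` steps with probability bounded away
from zero; so its exit distribution is a probability measure on `L_{j+1}` that is constant there,
i.e. uniform. Cutting a path from the origin at its first visit to `L_{j+1}` gives
`g(o, z) ≥ (1 / #L_{j+1}) ∑_{y ∈ L_{j+1}} g(y, z)`, and summing `#L_k` times these inequalities
over the layers of `D_n` gives the claim.
-/

open Finset

lemma ENNReal.tsum_pow_div_ne_top {c : ℝ≥0∞} (hc : c < 1) (p : ℕ) :
    ∑' t : ℕ, c ^ (t / (p + 1)) ≠ ⊤ := by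
  rw [← (Nat.divModEquiv (p + 1)).symm.tsum_eq]
  have hdiv : ∀ b : ℕ × Fin (p + 1), ((Nat.divModEquiv (p + 1)).symm b : ℕ) / (p + 1) = b.1 := by
    rintro ⟨i, r⟩
    show (i * (p + 1) + r) / (p + 1) = i
    rw [mul_comm, Nat.mul_add_div (Nat.succ_pos p), Nat.div_eq_of_lt r.isLt, add_zero]
  simp_rw [hdiv, ENNReal.tsum_prod' (f := fun b : ℕ × Fin (p + 1) => c ^ b.1), tsum_fintype,
    sum_const, card_univ, Fintype.card_fin, nsmul_eq_mul, ENNReal.tsum_mul_left,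
    ENNReal.tsum_geometric]
  exact ENNReal.mul_ne_top (ENNReal.natCast_ne_top _)
    (ENNReal.inv_ne_top.2 (tsub_pos_of_lt hc).ne')

lemma ENNReal.tsum_mul_tsum_eq_tsum_sum_antidiagonal (f g : ℕ → ℝ≥0∞) :
    (∑' n, f n) * ∑' n, g n = ∑' n, ∑ p ∈ antidiagonal n, f p.1 * g p.2 := by
  simp_rw [← ENNReal.tsum_mul_right, ← ENNReal.tsum_mul_left]
  rw [← ENNReal.tsum_prod' (f := fun p : ℕ × ℕ => f p.1 * g p.2),
    ← HasAntidiagonal.sigmaAntidiagonalEquivProd.tsum_eq, ENNReal.tsum_sigma']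
  exact tsum_congr fun n => Finset.tsum_subtype (antidiagonal n) fun p => f p.1 * g p.2

section KilledWalk

variable {α : Type*} [DecidableEq α] (q : α → α → ℝ≥0∞) (A : Finset α)

noncomputable def killedPow : ℕ → α → α → ℝ≥0∞
  | 0, x, y => if x = y ∧ y ∈ A then 1 else 0
  | t + 1, x, y => if y ∈ A then ∑ w ∈ A, killedPow t x w * q w y else 0

noncomputable def survival (t : ℕ) (x : α) : ℝ≥0∞ := ∑ y ∈ A, killedPow q A t x y

/-- Weight of the paths that stay in `A` up to time `t` and jump to `y` at time `t + 1`. -/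
noncomputable def exitPow (t : ℕ) (x y : α) : ℝ≥0∞ := ∑ w ∈ A, killedPow q A t x w * q w y

noncomputable def exitDist (x y : α) : ℝ≥0∞ := ∑' t, exitPow q A t x y

noncomputable def green (x y : α) : ℝ≥0∞ := ∑' t, killedPow q A t x y

variable {q A}

lemma killedPow_succ (t : ℕ) (x y : α) :
    killedPow q A (t + 1) x y = if y ∈ A then exitPow q A t x y else 0 := rfl

lemma killedPow_eq_zero_of_notMem {t : ℕ} {x y : α} (hy : y ∉ A) : killedPow q A t x y = 0 := by
  cases t <;> simp [killedPow, hy]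

lemma sum_mul_killedPow_zero {C : Finset α} (hC : C ⊆ A) (x : α) (f : α → ℝ≥0∞) :
    ∑ w ∈ C, f w * killedPow q A 0 w x = if x ∈ C then f x else 0 := by
  split_ifs with hx
  · simp [killedPow, hx, hC hx]
  · refine sum_eq_zero fun w hw => ?_
    simp only [killedPow, mul_ite, mul_one, mul_zero, ite_eq_right_iff, and_imp]
    rintro rfl
    exact absurd hw hx

lemma killedPow_add (s t : ℕ) (x z : α) :
    killedPow q A (s + t) x z = ∑ w ∈ A, killedPow q A s x w * killedPow q A t w z := by
  induction t generalizing z with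
  | zero =>
    rw [sum_mul_killedPow_zero subset_rfl]
    split_ifs with hz
    · rfl
    · exact killedPow_eq_zero_of_notMem hz
  | succ t ih =>
    rw [← add_assoc, killedPow_succ, exitPow]
    simp_rw [killedPow_succ, exitPow, ih, sum_mul, mul_ite, mul_zero]
    split_ifs with hz
    · rw [sum_comm]
      simp_rw [mul_sum, mul_assoc]
    · simp

lemma killedPow_mono {A' : Finset α} (h : A ⊆ A') (t : ℕ) (x y : α) :
    killedPow q A t x y ≤ killedPow q A' t x y := by
  induction t generalizing y with
  | zero =>
    simp only [killedPow]
    split_ifs with h₁ h₂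
    exacts [le_rfl, absurd ⟨h₁.1, h h₁.2⟩ h₂, zero_le, le_rfl]
  | succ t ih =>
    rw [killedPow_succ, killedPow_succ, exitPow, exitPow]
    split_ifs with hy hy'
    · exact (sum_le_sum fun w _ => mul_le_mul_left (ih w) _).trans
        (sum_le_sum_of_subset h)
    · exact absurd (h hy) hy'
    · exact zero_le
    · exact le_rfl

lemma mul_le_killedPow_succ {t : ℕ} {x w y : α} (hw : w ∈ A) (hy : y ∈ A) :
    killedPow q A t x w * q w y ≤ killedPow q A (t + 1) x y := by
  rw [killedPow_succ, if_pos hy, exitPow]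
  exact single_le_sum (f := fun w => killedPow q A t x w * q w y) (fun _ _ => zero_le) hw

lemma exitPow_mono {A' : Finset α} (h : A ⊆ A') (t : ℕ) (x y : α) :
    exitPow q A t x y ≤ exitPow q A' t x y :=
  (sum_le_sum fun w _ => by gcongr; exact killedPow_mono h t x w).trans
    (sum_le_sum_of_subset h)

lemma sum_killedPow_mul_of_subset {A' : Finset α} (h : A ⊆ A') (t : ℕ) (x y : α) :
    ∑ w ∈ A', killedPow q A t x w * q w y = exitPow q A t x y :=
  (sum_subset h fun w _ hw => by rw [killedPow_eq_zero_of_notMem hw, zero_mul]).symm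

lemma ite_add_ite_le_ite {B C : Finset α} (hB : B ⊆ A) (hC : C ⊆ A) (hBC : Disjoint B C)
    (z : α) (e : ℝ≥0∞) :
    ((if z ∈ B then e else 0) + if z ∈ C then e else 0) ≤ if z ∈ A then e else 0 := by
  by_cases hzB : z ∈ B
  · simp [hzB, Finset.disjoint_left.1 hBC hzB, hB hzB]
  · by_cases hzC : z ∈ C
    · simp [hzB, hzC, hC hzC]
    · simp [hzB, hzC]

-- Cut a path killed outside `A` at its first exit from `B`; exits into `C` are kept.
lemma killedPow_add_sum_exitPow_le {B C : Finset α} (hB : B ⊆ A) (hC : C ⊆ A)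
    (hBC : Disjoint B C) (x : α) (d : ℕ) (z : α) :
    killedPow q B (d + 1) x z + ∑ p ∈ antidiagonal d, ∑ y ∈ C,
        exitPow q B p.1 x y * killedPow q A p.2 y z ≤ killedPow q A (d + 1) x z := by
  induction d generalizing z with
  | zero =>
    simp only [Nat.antidiagonal_zero, sum_singleton, sum_mul_killedPow_zero hC, killedPow_succ]
    refine (ite_add_ite_le_ite hB hC hBC z _).trans ?_
    split_ifs
    exacts [exitPow_mono hB 0 x z, le_rfl]
  | succ d ih =>
    rw [Nat.sum_antidiagonal_succ', sum_mul_killedPow_zero hC, killedPow_succ (A := B),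
      ← add_assoc]
    by_cases hz : z ∉ A
    · have hzB : z ∉ B := fun h => hz (hB h)
      have hzC : z ∉ C := fun h => hz (hC h)
      simp [killedPow_eq_zero_of_notMem, hz, hzB, hzC]
    rw [not_not] at hz
    calc (if z ∈ B then exitPow q B (d + 1) x z else 0)
          + (if z ∈ C then exitPow q B (d + 1) x z else 0)
          + ∑ p ∈ antidiagonal d, ∑ y ∈ C, exitPow q B p.1 x y * killedPow q A (p.2 + 1) y z
        ≤ exitPow q B (d + 1) x z + ∑ p ∈ antidiagonal d, ∑ y ∈ C,
            exitPow q B p.1 x y * ∑ w ∈ A, killedPow q A p.2 y w * q w z := by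
          gcongr
          · simpa [hz] using ite_add_ite_le_ite hB hC hBC z (exitPow q B (d + 1) x z)
          · rw [killedPow_succ, if_pos hz, exitPow]
      _ = ∑ w ∈ A, (killedPow q B (d + 1) x w + ∑ p ∈ antidiagonal d, ∑ y ∈ C,
            exitPow q B p.1 x y * killedPow q A p.2 y w) * q w z := by
          simp_rw [add_mul, sum_add_distrib, sum_killedPow_mul_of_subset hB, sum_mul, mul_sum,
            mul_assoc]
          congr 1
          rw [sum_comm (s := A)]
          exact sum_congr rfl fun p _ => sum_comm
      _ ≤ killedPow q A (d + 2) x z := by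
          rw [killedPow_succ, if_pos hz, exitPow]
          gcongr with w
          exact ih w

lemma green_ge_sum_exitDist_mul_green {B C : Finset α} (hB : B ⊆ A) (hC : C ⊆ A)
    (hBC : Disjoint B C) (x z : α) :
    ∑ y ∈ C, exitDist q B x y * green q A y z ≤ green q A x z := by
  calc ∑ y ∈ C, exitDist q B x y * green q A y z
      = ∑' d, ∑ p ∈ antidiagonal d, ∑ y ∈ C, exitPow q B p.1 x y * killedPow q A p.2 y z := by
        simp_rw [exitDist, green, ENNReal.tsum_mul_tsum_eq_tsum_sum_antidiagonal]
        rw [← Summable.tsum_finsetSum fun _ _ => ENNReal.summable]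
        exact tsum_congr fun d => sum_comm
    _ ≤ ∑' d, killedPow q A (d + 1) x z :=
        ENNReal.tsum_le_tsum fun d =>
          le_add_self.trans (killedPow_add_sum_exitPow_le hB hC hBC x d z)
    _ ≤ green q A x z := ENNReal.tsum_comp_le_tsum_of_injective (add_left_injective 1) _

lemma survival_zero (x : α) : survival q A 0 x = if x ∈ A then 1 else 0 := by
  simp only [survival, killedPow, ite_and]
  rw [sum_ite_eq]
  split_ifs <;> rfl

lemma survival_succ (t : ℕ) (x : α) :
    survival q A (t + 1) x = ∑ w ∈ A, killedPow q A t x w * ∑ y ∈ A, q w y := by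
  calc survival q A (t + 1) x = ∑ y ∈ A, ∑ w ∈ A, killedPow q A t x w * q w y :=
        sum_congr rfl fun y hy => by rw [killedPow_succ, if_pos hy, exitPow]
    _ = _ := by simp_rw [mul_sum]; exact sum_comm

lemma survival_add (s t : ℕ) (x : α) :
    survival q A (s + t) x = ∑ w ∈ A, killedPow q A s x w * survival q A t w := by
  simp_rw [survival, killedPow_add, mul_sum]
  exact sum_comm

lemma killedPow_le_survival (t : ℕ) (x y : α) : killedPow q A t x y ≤ survival q A t x := by
  by_cases hy : y ∈ A
  · exact single_le_sum (f := killedPow q A t x) (fun _ _ => zero_le) hy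
  · simp [killedPow_eq_zero_of_notMem hy]

lemma green_le_tsum_survival (x y : α) : green q A x y ≤ ∑' t, survival q A t x :=
  ENNReal.tsum_le_tsum fun t => killedPow_le_survival t x y

lemma survival_succ_add_sum_exitPow {C : Finset α}
    (hC : ∀ w ∈ A, ∑ y ∈ A, q w y + ∑ y ∈ C, q w y = 1) (t : ℕ) (x : α) :
    survival q A (t + 1) x + ∑ y ∈ C, exitPow q A t x y = survival q A t x := by
  simp_rw [survival_succ, exitPow]
  rw [sum_comm, ← sum_add_distrib, survival]
  exact sum_congr rfl fun w hw => by rw [← mul_sum, ← mul_add, hC w hw, mul_one]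

lemma sum_exitDist_eq_one {C : Finset α} (hC : ∀ w ∈ A, ∑ y ∈ A, q w y + ∑ y ∈ C, q w y = 1)
    {x : α} (hx : x ∈ A) (hfin : ∑' t, survival q A t x ≠ ⊤) :
    ∑ y ∈ C, exitDist q A x y = 1 := by
  have htelescope : ∀ T, ∑ t ∈ range T, ∑ y ∈ C, exitPow q A t x y + survival q A T x = 1 := by
    intro T
    induction T with
    | zero => simp [survival_zero, hx]
    | succ T ih => rw [sum_range_succ, add_assoc, add_comm (∑ y ∈ C, _),
        survival_succ_add_sum_exitPow hC, ih]
  have hlim := (ENNReal.tendsto_nat_tsum fun t => ∑ y ∈ C, exitPow q A t x y).add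
    (ENNReal.tendsto_atTop_zero_of_tsum_ne_top hfin)
  simp_rw [htelescope, add_zero] at hlim
  simp only [exitDist]
  rw [← Summable.tsum_finsetSum fun _ _ => ENNReal.summable]
  exact tendsto_nhds_unique hlim tendsto_const_nhds

lemma survival_succ_le (hq : ∀ x, ∑' y, q x y ≤ 1) (t : ℕ) (x : α) :
    survival q A (t + 1) x ≤ survival q A t x := by
  rw [survival_succ, survival]
  exact sum_le_sum fun w _ =>
    mul_le_of_le_one_right zero_le ((ENNReal.sum_le_tsum A).trans (hq w))

lemma survival_antitone (hq : ∀ x, ∑' y, q x y ≤ 1) (x : α) : Antitone (survival q A · x) :=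
  antitone_nat_of_succ_le fun t => survival_succ_le hq t x

lemma survival_le_one (hq : ∀ x, ∑' y, q x y ≤ 1) (t : ℕ) (x : α) : survival q A t x ≤ 1 := by
  refine (survival_antitone hq x (Nat.zero_le t)).trans ?_
  change survival q A 0 x ≤ 1
  rw [survival_zero]
  split_ifs <;> simp

lemma survival_lt_one_of_killedPow_pos (hq : ∀ x, ∑' y, q x y ≤ 1) {A' : Finset α} (hA : A ⊆ A')
    {m : ℕ} {x z : α} (hz : z ∈ A') (hzA : z ∉ A) (hpos : 0 < killedPow q A' m x z) :
    survival q A m x < 1 := by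
  have hsub : ∑ y ∈ A, killedPow q A' m x y ≤ 1 :=
    (sum_le_sum_of_subset hA).trans (survival_le_one hq m x)
  calc survival q A m x ≤ ∑ y ∈ A, killedPow q A' m x y :=
        sum_le_sum fun y _ => killedPow_mono hA m x y
    _ < ∑ y ∈ A, killedPow q A' m x y + killedPow q A' m x z :=
        ENNReal.lt_add_right (ne_top_of_le_ne_top ENNReal.one_ne_top hsub) hpos.ne'
    _ = ∑ y ∈ insert z A, killedPow q A' m x y := by rw [sum_insert hzA, add_comm]
    _ ≤ 1 := (sum_le_sum_of_subset (insert_subset hz hA)).trans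
        (survival_le_one hq m x)

lemma survival_mul_le_pow (hq : ∀ x, ∑' y, q x y ≤ 1) {p : ℕ} {c : ℝ≥0∞}
    (hc : ∀ w ∈ A, survival q A p w ≤ c) (i : ℕ) (x : α) : survival q A (i * p) x ≤ c ^ i := by
  induction i with
  | zero => simpa using survival_le_one hq 0 x
  | succ i ih =>
    rw [add_mul, one_mul, survival_add, pow_succ]
    calc ∑ w ∈ A, killedPow q A (i * p) x w * survival q A p w
        ≤ ∑ w ∈ A, killedPow q A (i * p) x w * c :=
          sum_le_sum fun w hw => by gcongr; exact hc w hw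
      _ = survival q A (i * p) x * c := (sum_mul _ _ _).symm
      _ ≤ c ^ i * c := by gcongr

lemma tsum_survival_ne_top (hq : ∀ x, ∑' y, q x y ≤ 1) {p : ℕ}
    (hp : ∀ x ∈ A, survival q A (p + 1) x < 1) (x : α) : ∑' t, survival q A t x ≠ ⊤ := by
  have hc : A.sup (survival q A (p + 1)) < 1 := (Finset.sup_lt_iff zero_lt_one).2 hp
  refine ne_top_of_le_ne_top (ENNReal.tsum_pow_div_ne_top hc p) (ENNReal.tsum_le_tsum fun t => ?_)
  calc survival q A t x ≤ survival q A (t / (p + 1) * (p + 1)) x :=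
        survival_antitone hq x (Nat.div_mul_le_self t _)
    _ ≤ _ := survival_mul_le_pow hq (fun w hw => le_sup (f := survival q A (p + 1)) hw) _ x

end KilledWalk

section Paths

variable {α : Type*}

-- Paths are lists in reverse order: the head is the current position.
noncomputable def pathWeight (q : α → α → ℝ≥0∞) : List α → ℝ≥0∞
  | [] => 1
  | [_] => 1
  | a :: b :: l => q b a * pathWeight q (b :: l)

def traj {Ω : Type*} (X : ℕ → Ω → α) : ℕ → Ω → List α
  | 0, ω => [X 0 ω]
  | t + 1, ω => X (t + 1) ω :: traj X t ω

variable {q : α → α → ℝ≥0∞} {Ω : Type*} {X : ℕ → Ω → α}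

lemma pathWeight_cons_of_head? {l : List α} {w : α} (h : l.head? = some w) (z : α) :
    pathWeight q (z :: l) = q w z * pathWeight q l := by
  rcases l with _ | ⟨b, l⟩
  · simp at h
  · simp only [List.head?_cons, Option.some.injEq] at h
    rw [h, pathWeight]

lemma length_traj (t : ℕ) (ω : Ω) : (traj X t ω).length = t + 1 := by
  induction t with
  | zero => rfl
  | succ t ih => simp [traj, ih]

lemma getD_reverse_cons_of_lt {a : α} {l : List α} {s : ℕ} (hs : s < l.length) (d : α) :
    (a :: l).reverse.getD s d = l.reverse.getD s d := by
  rw [List.reverse_cons, List.getD_append _ _ _ _ (by simpa using hs)]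

lemma getD_reverse_cons_length (a : α) (l : List α) (d : α) :
    (a :: l).reverse.getD l.length d = a := by
  rw [List.reverse_cons, List.getD_append_right _ _ _ _ (by simp)]
  simp

lemma traj_eq_iff {t : ℕ} {ω : Ω} {l : List α} (hl : l.length = t + 1) (d : α) :
    traj X t ω = l ↔ ∀ s ≤ t, X s ω = l.reverse.getD s d := by
  induction t generalizing l with
  | zero =>
    rcases l with _ | ⟨a, _ | ⟨b, l⟩⟩ <;> simp at hl
    simp [traj]
  | succ t ih =>
    rcases l with _ | ⟨a, l⟩
    · simp at hl
    simp only [List.length_cons, add_left_inj] at hl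
    rw [traj, List.cons.injEq, ih hl]
    constructor
    · rintro ⟨ha, h⟩ s hs
      rcases Nat.lt_or_ge s (t + 1) with hs' | hs'
      · rw [getD_reverse_cons_of_lt (by omega), h s (by omega)]
      · rw [show s = l.length by omega, getD_reverse_cons_length, ← ha, hl]
    · intro h
      refine ⟨by rw [h _ le_rfl, ← hl, getD_reverse_cons_length], fun s hs => ?_⟩
      rw [h s (by omega), getD_reverse_cons_of_lt (by omega)]

lemma prod_range_eq_pathWeight {t : ℕ} {l : List α} (hl : l.length = t + 1) (d : α) :
    ∏ s ∈ range t, q (l.reverse.getD s d) (l.reverse.getD (s + 1) d) = pathWeight q l := by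
  induction t generalizing l with
  | zero =>
    rcases l with _ | ⟨a, _ | ⟨b, l⟩⟩ <;> simp at hl
    simp [pathWeight]
  | succ t ih =>
    rcases l with _ | ⟨a, _ | ⟨b, l⟩⟩ <;> simp at hl
    rw [prod_range_succ, pathWeight, ← ih (by simpa using hl), mul_comm]
    congr 1
    · subst hl
      have h := getD_reverse_cons_length a (b :: l) d
      rw [List.length_cons] at h
      rw [getD_reverse_cons_of_lt (by simp), getD_reverse_cons_length, h]
    · refine prod_congr rfl fun s hs => ?_
      rw [mem_range] at hs
      rw [getD_reverse_cons_of_lt (l := b :: l) (by simp; omega),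
        getD_reverse_cons_of_lt (l := b :: l) (by simp; omega)]

variable [DecidableEq α] {A : Finset α}

def pathsBetween (A : Finset α) : ℕ → α → α → Finset (List α)
  | 0, x, z => if x = z ∧ z ∈ A then {[z]} else ∅
  | t + 1, x, z => if z ∈ A then A.biUnion fun w => (pathsBetween A t x w).image (z :: ·) else ∅

lemma mem_pathsBetween_succ {t : ℕ} {x z : α} {l : List α} :
    l ∈ pathsBetween A (t + 1) x z ↔
      z ∈ A ∧ ∃ w ∈ A, ∃ l' ∈ pathsBetween A t x w, l = z :: l' := by
  simp only [pathsBetween]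
  split_ifs with hz <;> simp [hz, eq_comm]

lemma mem_pathsBetween_iff {t : ℕ} {x z : α} {l : List α} :
    l ∈ pathsBetween A t x z ↔
      l.length = t + 1 ∧ (∀ a ∈ l, a ∈ A) ∧ l.head? = some z ∧ l.getLast? = some x := by
  induction t generalizing z l with
  | zero =>
    simp only [pathsBetween]
    split_ifs with h
    · rcases l with _ | ⟨a, _ | ⟨b, l⟩⟩ <;> simp
      grind
    · rcases l with _ | ⟨a, _ | ⟨b, l⟩⟩ <;> simp
      grind
  | succ t ih =>
    rw [mem_pathsBetween_succ]
    rcases l with _ | ⟨a, l⟩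
    · simp
    simp only [ih, List.cons.injEq]
    rcases l with _ | ⟨b, l⟩
    · simp
    · simp only [List.getLast?_cons_cons, List.head?_cons, Option.some.injEq, List.length_cons,
        List.forall_mem_cons]
      grind

lemma disjoint_pathsBetween {t : ℕ} {x x' z z' : α} (h : x ≠ x' ∨ z ≠ z') :
    Disjoint (pathsBetween A t x z) (pathsBetween A t x' z') := by
  refine disjoint_left.2 fun l hl hl' => ?_
  rw [mem_pathsBetween_iff] at hl hl'
  rcases h with h | h
  · exact h (Option.some.inj (hl.2.2.2.symm.trans hl'.2.2.2))
  · exact h (Option.some.inj (hl.2.2.1.symm.trans hl'.2.2.1))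

lemma sum_pathWeight_pathsBetween (t : ℕ) (x z : α) :
    ∑ l ∈ pathsBetween A t x z, pathWeight q l = killedPow q A t x z := by
  induction t generalizing z with
  | zero =>
    simp only [pathsBetween, killedPow]
    split_ifs <;> simp [pathWeight]
  | succ t ih =>
    simp only [pathsBetween, killedPow_succ, exitPow]
    split_ifs with hz
    · rw [sum_biUnion]
      · refine sum_congr rfl fun w _ => ?_
        rw [sum_image fun _ _ _ _ h => List.cons_injective h, ← ih, sum_mul]
        refine sum_congr rfl fun l hl => ?_
        rw [pathWeight_cons_of_head? (mem_pathsBetween_iff.1 hl).2.2.1, mul_comm]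
      · intro w _ w' _ hww'
        simp only [Function.onFun, disjoint_left, mem_image]
        rintro _ ⟨l, hl, rfl⟩ ⟨l', hl', h⟩
        obtain rfl := List.cons_injective h
        exact hww' (Option.some.inj
          ((mem_pathsBetween_iff.1 hl).2.2.1.symm.trans (mem_pathsBetween_iff.1 hl').2.2.1))
    · rfl

lemma traj_mem_pathsBetween_iff {t : ℕ} {ω : Ω} {x z : α} :
    traj X t ω ∈ pathsBetween A t x z ↔ X 0 ω = x ∧ X t ω = z ∧ ∀ s ≤ t, X s ω ∈ A := by
  induction t generalizing z with
  | zero =>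
    simp only [traj, pathsBetween]
    split_ifs with h <;> simp <;> grind
  | succ t ih =>
    simp only [traj, mem_pathsBetween_succ, List.cons.injEq]
    constructor
    · rintro ⟨hz, w, -, l', hl', hX, rfl⟩
      obtain ⟨h0, -, hs⟩ := ih.1 hl'
      refine ⟨h0, hX, fun s hs' => ?_⟩
      rcases Nat.lt_or_ge s (t + 1) with h | h
      · exact hs s (by omega)
      · rwa [show s = t + 1 by omega, hX]
    · rintro ⟨h0, hX, hs⟩
      exact ⟨hX ▸ hs _ le_rfl, X t ω, hs t (by omega), traj X t ω,
        ih.2 ⟨h0, rfl, fun s hs' => hs s (by omega)⟩, hX, rfl⟩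

end Paths

-- The events of the walk are not assumed measurable; this replaces finite additivity of `μ`.
lemma measure_preimage_finset_eq_sum {Ω ι : Type*} [MeasurableSpace Ω] {μ : Measure Ω}
    [IsFiniteMeasure μ] [Countable ι] (f : Ω → ι) (hf : ∑' i, μ (f ⁻¹' {i}) ≤ μ Set.univ)
    (T : Finset ι) : μ (f ⁻¹' T) = ∑ i ∈ T, μ (f ⁻¹' {i}) := by
  have hunion : ∀ S : Set ι, f ⁻¹' S = ⋃ i ∈ S, f ⁻¹' {i} := fun S => by
    ext ω; simp
  refine le_antisymm ?_ ?_
  · rw [hunion]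
    exact measure_biUnion_finset_le T _
  have hcompl : μ (f ⁻¹' (↑T)ᶜ) ≤ ∑' i : ↥((↑T)ᶜ : Set ι), μ (f ⁻¹' {(i : ι)}) := by
    rw [hunion]
    exact measure_biUnion_le μ (Set.to_countable _) _
  have htot : ∑ i ∈ T, μ (f ⁻¹' {i}) + ∑' i : ↥((↑T)ᶜ : Set ι), μ (f ⁻¹' {(i : ι)})
      = ∑' i, μ (f ⁻¹' {i}) := by
    rw [← Finset.tsum_subtype' T]
    exact Summable.tsum_add_tsum_compl (f := fun i => μ (f ⁻¹' {i})) (s := (T : Set ι))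
      ENNReal.summable ENNReal.summable
  have hfin : ∑' i : ↥((↑T)ᶜ : Set ι), μ (f ⁻¹' {(i : ι)}) ≠ ⊤ :=
    ne_top_of_le_ne_top (measure_ne_top μ Set.univ)
      ((le_add_self.trans_eq htot).trans hf)
  refine ENNReal.le_of_add_le_add_right hfin ?_
  calc _ = ∑' i, μ (f ⁻¹' {i}) := htot
    _ ≤ μ Set.univ := hf
    _ ≤ μ (f ⁻¹' T) + μ (f ⁻¹' (↑T)ᶜ) := by
        refine (measure_mono ?_).trans (measure_union_le _ _)
        rw [← Set.preimage_union, Set.union_compl_self, Set.preimage_univ]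
    _ ≤ _ := by gcongr

noncomputable def ofRealKernel {α : Type*} (Q : α → α → ℝ) (x y : α) : ℝ≥0∞ :=
  ENNReal.ofReal (Q x y)

lemma IsULW.tsum_ofRealKernel {Q : Z2 → Z2 → ℝ} (hQ : IsULW Q) (x : Z2) :
    ∑' y, ofRealKernel Q x y = 1 := by
  have hs : Summable (Q x) := by
    by_contra h
    have := hQ.rowSum x
    rw [tsum_eq_zero_of_not_summable h] at this
    exact zero_ne_one this
  simp only [ofRealKernel]
  rw [← ENNReal.ofReal_tsum_of_nonneg (hQ.nonneg x) hs, hQ.rowSum x, ENNReal.ofReal_one]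

section Walk

variable {Ω : Type} [MeasurableSpace Ω] {P : Measure Ω} {Q : Z2 → Z2 → ℝ} {X : ℕ → Ω → Z2}
  {y : Z2}

lemma IsWalkFrom.measure_traj_preimage (hQ : IsULW Q) (hX : IsWalkFrom P X Q y) (t : ℕ)
    (l : List Z2) : P (traj X t ⁻¹' {l}) =
      if l.length = t + 1 ∧ l.getLast? = some y then pathWeight (ofRealKernel Q) l else 0 := by
  by_cases hl : l.length = t + 1
  · have hset : traj X t ⁻¹' {l} = {ω | ∀ s ≤ t, X s ω = l.reverse.getD s y} :=
      Set.ext fun ω => traj_eq_iff hl y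
    have hne : l ≠ [] := List.ne_nil_of_length_eq_add_one hl
    have hstart : l.reverse.getD 0 y = y ↔ l.getLast? = some y := by
      simp [List.getD_eq_getElem?_getD, ← List.head?_eq_getElem?,
        List.getLast?_eq_some_getLast hne]
    rw [hset, hX, ENNReal.ofReal_mul (by positivity), ENNReal.ofReal_prod_of_nonneg
      fun _ _ => hQ.nonneg _ _, ← prod_range_eq_pathWeight (q := ofRealKernel Q) hl y]
    simp only [hl, true_and, ← hstart, ofRealKernel]
    split_ifs <;> simp
  · have : traj X t ⁻¹' {l} = ∅ :=
      Set.eq_empty_of_forall_notMem fun ω h => hl (h ▸ length_traj t ω)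
    simp [this, hl]

lemma IsWalkFrom.tsum_measure_traj_preimage_le (hQ : IsULW Q) (hX : IsWalkFrom P X Q y)
    (t : ℕ) : ∑' l, P (traj X t ⁻¹' {l}) ≤ 1 := by
  refine ENNReal.summable.tsum_le_of_sum_le fun F => ?_
  set A := F.biUnion List.toFinset
  calc ∑ l ∈ F, P (traj X t ⁻¹' {l})
      ≤ ∑ l ∈ A.biUnion (pathsBetween A t y), P (traj X t ⁻¹' {l}) := by
        refine sum_le_sum_of_ne_zero fun l hlF hl => ?_
        rw [hX.measure_traj_preimage hQ] at hl
        obtain ⟨hlen, hlast⟩ : l.length = t + 1 ∧ l.getLast? = some y := by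
          by_contra h
          exact hl (if_neg h)
        have hne : l ≠ [] := List.ne_nil_of_length_eq_add_one hlen
        have hmem : ∀ a ∈ l, a ∈ A := fun a ha =>
          mem_biUnion.2 ⟨l, hlF, List.mem_toFinset.2 ha⟩
        exact mem_biUnion.2 ⟨l.head hne, hmem _ (List.head_mem hne),
          mem_pathsBetween_iff.2 ⟨hlen, hmem, List.head?_eq_some_head hne, hlast⟩⟩
    _ = survival (ofRealKernel Q) A t y := by
        rw [sum_biUnion fun z _ z' _ hzz' => disjoint_pathsBetween (Or.inr hzz')]
        refine sum_congr rfl fun z _ => ?_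
        rw [← sum_pathWeight_pathsBetween]
        refine sum_congr rfl fun l hl => ?_
        obtain ⟨hlen, -, -, hlast⟩ := mem_pathsBetween_iff.1 hl
        rw [hX.measure_traj_preimage hQ, if_pos ⟨hlen, hlast⟩]
    _ ≤ 1 := survival_le_one (fun x => (hQ.tsum_ofRealKernel x).le) t y

lemma IsWalkFrom.measure_killed_eq [IsProbabilityMeasure P] (hQ : IsULW Q)
    (hX : IsWalkFrom P X Q y) {A : Finset Z2} (hy : y ∈ A) (t : ℕ) (z : Z2) :
    P {ω | X t ω = z ∧ ∀ s ≤ t, X s ω ∈ A} = killedPow (ofRealKernel Q) A t y z := by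
  have hset : {ω | X t ω = z ∧ ∀ s ≤ t, X s ω ∈ A} =
      traj X t ⁻¹' ↑(A.biUnion fun x => pathsBetween A t x z) := by
    ext ω
    simp only [Set.mem_ofPred_eq, Set.mem_preimage, coe_biUnion, mem_coe, Set.mem_iUnion,
      traj_mem_pathsBetween_iff, exists_prop]
    exact ⟨fun h => ⟨X 0 ω, h.2 0 (Nat.zero_le t), rfl, h⟩, fun ⟨_, _, _, h⟩ => h⟩
  rw [hset, measure_preimage_finset_eq_sum _ ((hX.tsum_measure_traj_preimage_le hQ t).trans_eq
    measure_univ.symm), sum_biUnion fun x _ x' _ hxx' => disjoint_pathsBetween (Or.inl hxx'),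
    sum_eq_single_of_mem y hy, ← sum_pathWeight_pathsBetween]
  · refine sum_congr rfl fun l hl => ?_
    obtain ⟨hlen, -, -, hlast⟩ := mem_pathsBetween_iff.1 hl
    rw [hX.measure_traj_preimage hQ, if_pos ⟨hlen, hlast⟩]
  · intro x _ hxy
    refine sum_eq_zero fun l hl => ?_
    obtain ⟨-, -, -, hlast⟩ := mem_pathsBetween_iff.1 hl
    rw [hX.measure_traj_preimage hQ,
      if_neg fun h => hxy (Option.some.inj (hlast.symm.trans h.2))]

end Walk

lemma dnorm_eq_zero {x : Z2} : dnorm x = 0 ↔ x = origin := by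
  simp [dnorm, origin, Prod.ext_iff]

lemma mem_diamondF {n : ℕ} {x : Z2} : x ∈ diamondF n ↔ dnorm x ≤ n := by
  simp only [diamondF, mem_filter, mem_Icc, and_iff_right_iff_imp]
  intro h
  simp only [dnorm] at h
  exact ⟨Prod.mk_le_mk.2 ⟨by omega, by omega⟩, Prod.mk_le_mk.2 ⟨by omega, by omega⟩⟩

lemma origin_mem_diamondF (n : ℕ) : origin ∈ diamondF n :=
  mem_diamondF.2 ((dnorm_eq_zero.2 rfl).trans_le n.zero_le)

lemma diamondF_mono {m n : ℕ} (h : m ≤ n) : diamondF m ⊆ diamondF n :=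
  fun _ hx => mem_diamondF.2 ((mem_diamondF.1 hx).trans h)

noncomputable def layerF (k : ℕ) : Finset Z2 := (diamondF k).filter (dnorm · = k)

lemma mem_layerF {k : ℕ} {x : Z2} : x ∈ layerF k ↔ dnorm x = k := by
  simp only [layerF, mem_filter, mem_diamondF, and_iff_right_iff_imp]
  exact le_of_eq

lemma layerF_zero : layerF 0 = {origin} := by
  ext x
  rw [mem_layerF, mem_singleton, dnorm_eq_zero]

lemma layerF_subset_diamondF {k n : ℕ} (h : k ≤ n) : layerF k ⊆ diamondF n :=
  fun _ hx => mem_diamondF.2 ((mem_layerF.1 hx).trans_le h)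

lemma disjoint_diamondF_layerF (k : ℕ) : Disjoint (diamondF k) (layerF (k + 1)) :=
  disjoint_left.2 fun x hx hx' => by
    rw [mem_diamondF] at hx
    rw [mem_layerF] at hx'
    omega

lemma sum_diamondF_eq_sum_layerF {M : Type*} [AddCommMonoid M] (n : ℕ) (f : Z2 → M) :
    ∑ x ∈ diamondF n, f x = ∑ k ∈ range (n + 1), ∑ x ∈ layerF k, f x := by
  rw [← sum_fiberwise_of_maps_to (g := dnorm) (t := range (n + 1))
    fun x hx => mem_range.2 (Nat.lt_succ_of_le (mem_diamondF.1 hx))]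
  refine sum_congr rfl fun k hk => sum_congr ?_ fun _ _ => rfl
  ext x
  rw [mem_filter, mem_diamondF, mem_layerF, mem_range] at *
  omega

namespace IsULW

variable {Q : Z2 → Z2 → ℝ}

lemma ofRealKernel_eq_zero (hQ : IsULW Q) {x y : Z2} (h : dnorm x + 1 < dnorm y) :
    ofRealKernel Q x y = 0 := by
  rw [ofRealKernel, hQ.u1 x y h, ENNReal.ofReal_zero]

lemma sum_layerF_ofRealKernel_congr (hQ : IsULW Q) (k : ℕ) {y z : Z2}
    (h : dnorm y = dnorm z) :
    ∑ x ∈ layerF k, ofRealKernel Q x y = ∑ x ∈ layerF k, ofRealKernel Q x z := by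
  have hlayer : layer k = (layerF k : Set Z2) := by
    ext x
    simp [layer, mem_layerF]
  have hu := hQ.u3 k y z h
  rw [hlayer, Finset.tsum_subtype' (layerF k) (Q · y), Finset.tsum_subtype' (layerF k) (Q · z)]
    at hu
  simp only [ofRealKernel]
  rw [← ENNReal.ofReal_sum_of_nonneg fun x _ => hQ.nonneg x y,
    ← ENNReal.ofReal_sum_of_nonneg fun x _ => hQ.nonneg x z, hu]

lemma sum_diamondF_add_sum_layerF (hQ : IsULW Q) {k : ℕ} {w : Z2} (hw : w ∈ diamondF k) :
    ∑ y ∈ diamondF k, ofRealKernel Q w y + ∑ y ∈ layerF (k + 1), ofRealKernel Q w y = 1 := by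
  have hsplit : diamondF (k + 1) = diamondF k ∪ layerF (k + 1) := by
    ext y
    rw [mem_union, mem_diamondF, mem_diamondF, mem_layerF]
    omega
  rw [← sum_union (disjoint_diamondF_layerF k), ← hsplit, ← hQ.tsum_ofRealKernel w]
  refine (tsum_eq_sum fun y hy => hQ.ofRealKernel_eq_zero ?_).symm
  rw [mem_diamondF] at hw hy
  omega

lemma sum_diamondF_mul_congr (hQ : IsULW Q) {f : Z2 → ℝ≥0∞}
    (hf : ∀ w w', dnorm w = dnorm w' → f w = f w') (j : ℕ) {x x' : Z2}
    (h : dnorm x = dnorm x') :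
    ∑ w ∈ diamondF j, f w * ofRealKernel Q w x =
      ∑ w ∈ diamondF j, f w * ofRealKernel Q w x' := by
  simp_rw [sum_diamondF_eq_sum_layerF]
  refine sum_congr rfl fun i _ => ?_
  have hrep : ∀ w ∈ layerF i, f w = f ((i : ℤ), 0) := fun w hw =>
    hf _ _ (by rw [mem_layerF.1 hw]; simp [dnorm])
  have hpull : ∀ y, ∑ w ∈ layerF i, f w * ofRealKernel Q w y =
      f ((i : ℤ), 0) * ∑ w ∈ layerF i, ofRealKernel Q w y := fun y => by
    rw [mul_sum]
    exact sum_congr rfl fun w hw => by rw [hrep w hw]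
  rw [hpull, hpull, hQ.sum_layerF_ofRealKernel_congr i h]

lemma killedPow_origin_congr (hQ : IsULW Q) (j t : ℕ) {x x' : Z2} (h : dnorm x = dnorm x') :
    killedPow (ofRealKernel Q) (diamondF j) t origin x =
      killedPow (ofRealKernel Q) (diamondF j) t origin x' := by
  induction t generalizing x x' with
  | zero =>
    simp only [killedPow, mem_diamondF, h, eq_comm (a := origin), ← dnorm_eq_zero]
  | succ t ih =>
    simp only [killedPow_succ, exitPow, mem_diamondF, h]
    rw [hQ.sum_diamondF_mul_congr (fun w w' hw => ih hw) j h]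

lemma exitDist_origin_congr (hQ : IsULW Q) (j : ℕ) {x x' : Z2} (h : dnorm x = dnorm x') :
    exitDist (ofRealKernel Q) (diamondF j) origin x =
      exitDist (ofRealKernel Q) (diamondF j) origin x' :=
  tsum_congr fun t => hQ.sum_diamondF_mul_congr (fun _ _ => hQ.killedPow_origin_congr j t) j h

lemma exists_killedPow_pos (hQ : IsULW Q) (x : Z2) (m : ℕ) :
    ∃ z, dnorm z = dnorm x + m ∧
      0 < killedPow (ofRealKernel Q) (diamondF (dnorm x + m)) m x z := by
  induction m with
  | zero =>
    refine ⟨x, rfl, ?_⟩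
    simp [killedPow, mem_diamondF]
  | succ m ih =>
    obtain ⟨z, hz, hpos⟩ := ih
    obtain ⟨z', hz', hQz⟩ := hQ.u2 z
    refine ⟨z', by omega, lt_of_lt_of_le ?_ (mul_le_killedPow_succ (w := z)
      (mem_diamondF.2 (by omega)) (mem_diamondF.2 (by omega)))⟩
    refine ENNReal.mul_pos (lt_of_lt_of_le hpos ?_).ne' (ENNReal.ofReal_pos.2 hQz).ne'
    exact killedPow_mono (diamondF_mono (Nat.le_succ _)) m x z

lemma survival_diamondF_lt_one (hQ : IsULW Q) {j : ℕ} {x : Z2} (hx : x ∈ diamondF j) :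
    survival (ofRealKernel Q) (diamondF j) (j + 1) x < 1 := by
  have hxj := mem_diamondF.1 hx
  obtain ⟨z, hz, hpos⟩ := hQ.exists_killedPow_pos x (j + 1 - dnorm x)
  have hq : ∀ x, ∑' y, ofRealKernel Q x y ≤ 1 := fun x => (hQ.tsum_ofRealKernel x).le
  rw [show dnorm x + (j + 1 - dnorm x) = j + 1 by omega] at hz hpos
  refine lt_of_le_of_lt (survival_antitone hq x (by omega : j + 1 - dnorm x ≤ j + 1)) ?_
  exact survival_lt_one_of_killedPow_pos hq (diamondF_mono j.le_succ) (mem_diamondF.2 hz.le)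
    (fun h => by rw [mem_diamondF] at h; omega) hpos

lemma tsum_survival_diamondF_ne_top (hQ : IsULW Q) (j : ℕ) (x : Z2) :
    ∑' t, survival (ofRealKernel Q) (diamondF j) t x ≠ ⊤ :=
  tsum_survival_ne_top (fun x => (hQ.tsum_ofRealKernel x).le)
    (fun _ hx => hQ.survival_diamondF_lt_one hx) x

lemma card_layerF_mul_exitDist (hQ : IsULW Q) (j : ℕ) {y : Z2} (hy : y ∈ layerF (j + 1)) :
    ((layerF (j + 1)).card : ℝ≥0∞) * exitDist (ofRealKernel Q) (diamondF j) origin y = 1 := by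
  rw [← sum_exitDist_eq_one (C := layerF (j + 1))
    (fun w hw => hQ.sum_diamondF_add_sum_layerF hw) (origin_mem_diamondF j)
    (hQ.tsum_survival_diamondF_ne_top j origin), ← nsmul_eq_mul, ← sum_const]
  exact sum_congr rfl fun y' hy' =>
    hQ.exitDist_origin_congr j ((mem_layerF.1 hy).trans (mem_layerF.1 hy').symm)

lemma sum_layerF_green_le (hQ : IsULW Q) {k n : ℕ} (hkn : k ≤ n) (z : Z2) :
    ∑ y ∈ layerF k, green (ofRealKernel Q) (diamondF n) y z ≤
      (layerF k).card * green (ofRealKernel Q) (diamondF n) origin z := by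
  rcases k with _ | j
  · simp [layerF_zero]
  calc ∑ y ∈ layerF (j + 1), green (ofRealKernel Q) (diamondF n) y z
      = (layerF (j + 1)).card * ∑ y ∈ layerF (j + 1),
          exitDist (ofRealKernel Q) (diamondF j) origin y *
            green (ofRealKernel Q) (diamondF n) y z := by
        rw [mul_sum]
        exact sum_congr rfl fun y hy => by
          rw [← mul_assoc, hQ.card_layerF_mul_exitDist j hy, one_mul]
    _ ≤ _ := by
        gcongr
        exact green_ge_sum_exitDist_mul_green (diamondF_mono (by omega))
          (layerF_subset_diamondF hkn) (disjoint_diamondF_layerF j) origin z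

lemma sum_diamondF_green_le (hQ : IsULW Q) (n : ℕ) (z : Z2) :
    ∑ y ∈ diamondF n, green (ofRealKernel Q) (diamondF n) y z ≤
      (diamondF n).card * green (ofRealKernel Q) (diamondF n) origin z := by
  rw [sum_diamondF_eq_sum_layerF, card_eq_sum_ones, sum_diamondF_eq_sum_layerF, Nat.cast_sum,
    sum_mul]
  refine sum_le_sum fun k hk => ?_
  simpa using hQ.sum_layerF_green_le (Nat.lt_succ_iff.1 (mem_range.1 hk)) z

end IsULW

theorem statement17_general
    {Ω : Type} [MeasurableSpace Ω] (P : Measure Ω) [IsProbabilityMeasure P]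
    (Q : Z2 → Z2 → ℝ) (hQ : IsULW Q) (n : ℕ)
    (X : Z2 → ℕ → Ω → Z2) (hwalk : ∀ y, IsWalkFrom P (X y) Q y) :
    (∀ y ∈ diamondF n, ∀ z ∈ diamondF n,
        (∑' t : ℕ, P {ω | X y t ω = z ∧ ∀ s ≤ t, dnorm (X y s ω) ≤ n}) ≠ ⊤) ∧
    (∀ z ∈ diamondF n,
        (∑ y ∈ diamondF n, ∑' t : ℕ, P {ω | X y t ω = z ∧ ∀ s ≤ t, dnorm (X y s ω) ≤ n})
            / ((diamondF n).card : ℝ≥0∞)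
          ≤ ∑' t : ℕ, P {ω | X origin t ω = z ∧ ∀ s ≤ t, dnorm (X origin s ω) ≤ n}) := by
  have hgreen : ∀ y ∈ diamondF n, ∀ z,
      ∑' t : ℕ, P {ω | X y t ω = z ∧ ∀ s ≤ t, dnorm (X y s ω) ≤ n} =
        green (ofRealKernel Q) (diamondF n) y z := fun y hy z => by
    simp_rw [← mem_diamondF]
    exact tsum_congr fun t => (hwalk y).measure_killed_eq hQ hy t z
  refine ⟨fun y hy z _ => ?_, fun z _ => ?_⟩
  · rw [hgreen y hy z]
    exact ne_top_of_le_ne_top (hQ.tsum_survival_diamondF_ne_top n y) (green_le_tsum_survival y z)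
  · rw [sum_congr rfl fun y hy => hgreen y hy z, hgreen origin (origin_mem_diamondF n) z]
    exact ENNReal.div_le_of_le_mul' (hQ.sum_diamondF_green_le n z)

/-- **Mean value property of the Green's function on the diamond.** For a uniformly
layered walk killed on exiting `D_n`, with Green's function
`g(y,z) = E_y[#{t ≥ 0 : X(t) = z, t < first exit time of D_n}]` (these expectations
are finite), one has `g(o,z) ≥ (1/#D_n) Σ_{y∈D_n} g(y,z)` for all `z ∈ D_n`. -/
theorem statement17
    {Ω : Type} [MeasurableSpace Ω] (P : Measure Ω) [IsProbabilityMeasure P]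
    (Q : Z2 → Z2 → ℝ) (hQ : IsULW Q) (n : ℕ) (hn : 1 ≤ n)
    (X : Z2 → ℕ → Ω → Z2) (hwalk : ∀ y, IsWalkFrom P (X y) Q y) :
    (∀ y ∈ diamondF n, ∀ z ∈ diamondF n,
        (∑' t : ℕ, P {ω | X y t ω = z ∧ ∀ s ≤ t, dnorm (X y s ω) ≤ n}) ≠ ⊤) ∧
    (∀ z ∈ diamondF n,
        (∑ y ∈ diamondF n, ∑' t : ℕ, P {ω | X y t ω = z ∧ ∀ s ≤ t, dnorm (X y s ω) ≤ n})
            / ((diamondF n).card : ℝ≥0∞)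
          ≤ ∑' t : ℕ, P {ω | X origin t ω = z ∧ ∀ s ≤ t, dnorm (X origin s ω) ≤ n}) :=
  statement17_general P Q hQ n X hwalk
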